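/- Let W and W̃ be symmetric n×n real matrices with nonnegative entries and no zero rows, and let ν = (max_{i,j} W_{ij}/W̃_{ij})·(max_{i,j} W̃_{ij}/W_{ij}) (ratios taken as 1 when both numerator and denominator are 0, and +∞ if exactly one is 0; assume ν is finite). Then the second-smallest eigenvalue of the normalized Laplacian of W̃ is at most ν times the second-smallest eigenvalue of the normalized Laplacian of W. -/

import Mathlib

/-!
Writing `x = D^{1/2} y`, with `D` the diagonal degree matrix, the Rayleigh quotient of the
normalized Laplacian of `W` becomes `(½ ∑ W i j (y i - y j)²) / ∑ dᵢ yᵢ²` under the constraint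
`∑ dᵢ yᵢ = 0`. A test vector `y` for `W` is made admissible for `W̃` by subtracting its
`W̃`-degree-weighted mean. This leaves the numerator unchanged, and there `W̃ ≤ b W` costs a
factor `b`. Since `y` was `W`-centred, the shift can only increase the `W`-denominator, and
`W ≤ a W̃` then costs a factor `a` in the denominator.
-/

open Matrix Finset

/-- ratio with the convention that `0/0 = 1`. -/
noncomputable def ratio01 (a b : ℝ) : ℝ := if a = 0 ∧ b = 0 then 1 else a / b

/-- The normalized Laplacian `I - a⁻¹ A a⁻¹` where `a` is the diagonal matrix with
`a_{ii} = sqrt (Σ_j A_{ij})`. -/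
noncomputable def normLap {n : ℕ} (A : Matrix (Fin n) (Fin n) ℝ) : Matrix (Fin n) (Fin n) ℝ :=
  1 - Matrix.of fun i j => A i j / (Real.sqrt (∑ k, A i k) * Real.sqrt (∑ k, A j k))

/-- The second-smallest eigenvalue of the normalized Laplacian of `A`, characterized
variationally as the infimum of the Rayleigh quotient over nonzero vectors orthogonal to
the kernel vector `(sqrt (Σ_j A_{ij}))_i`. -/
noncomputable def lambdaUp2 {n : ℕ} (A : Matrix (Fin n) (Fin n) ℝ) : ℝ :=
  sInf {r : ℝ | ∃ x : Fin n → ℝ, x ≠ 0 ∧ (∑ i, x i * Real.sqrt (∑ k, A i k)) = 0 ∧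
    r = (∑ i, ∑ j, x i * normLap A i j * x j) / (∑ i, x i ^ 2)}

theorem csInf_le_mul_csInf {S T : Set ℝ} (hS : BddBelow S) (hT : T.Nonempty) {c : ℝ} (hc : 0 < c)
    (h : ∀ t ∈ T, ∃ s ∈ S, s ≤ c * t) : sInf S ≤ c * sInf T := by
  rw [← div_le_iff₀' hc]
  refine le_csInf hT fun t ht => ?_
  obtain ⟨s, hs, hst⟩ := h t ht
  exact (div_le_iff₀' hc).2 ((csInf_le hS hs).trans hst)

theorem le_mul_of_ratio01_le {a b M : ℝ} (hb : 0 ≤ b) (hab : a = 0 ↔ b = 0)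
    (h : ratio01 a b ≤ M) : a ≤ M * b := by
  rcases hb.eq_or_lt with rfl | hb
  · simp [hab.2 rfl]
  · rw [ratio01, if_neg fun h => hb.ne' h.2] at h
    exact (div_le_iff₀ hb).1 h

theorem ratio01_pos {a b : ℝ} (ha : 0 < a) (hb : 0 < b) : 0 < ratio01 a b := by
  rw [ratio01, if_neg fun h => ha.ne' h.1]
  exact div_pos ha hb

namespace Matrix

variable {ι : Type*} [Fintype ι]

def degree (A : Matrix ι ι ℝ) (i : ι) : ℝ := ∑ k, A i k

def degreeNormSq (A : Matrix ι ι ℝ) (y : ι → ℝ) : ℝ := ∑ i, A.degree i * y i ^ 2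

noncomputable def dirichletForm (A : Matrix ι ι ℝ) (y : ι → ℝ) : ℝ :=
  2⁻¹ * ∑ i, ∑ j, A i j * (y i - y j) ^ 2

/-- The Rayleigh quotients of `normLap A` written in the coordinates `x = D ^ (1/2) y`, where
`D = diagonal A.degree`. -/
def rayleighQuotients (A : Matrix ι ι ℝ) : Set ℝ :=
  {r | ∃ y : ι → ℝ, y ≠ 0 ∧ ∑ i, A.degree i * y i = 0 ∧ r = A.dirichletForm y / A.degreeNormSq y}

section

variable {A B : Matrix ι ι ℝ}

theorem degree_nonneg (hA : ∀ i j, 0 ≤ A i j) (i : ι) : 0 ≤ A.degree i :=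
  Finset.sum_nonneg fun k _ => hA i k

theorem degree_pos (hA : ∀ i j, 0 ≤ A i j) {i : ι} (hi : ∃ j, 0 < A i j) : 0 < A.degree i :=
  let ⟨j, hj⟩ := hi
  Finset.sum_pos' (fun k _ => hA i k) ⟨j, Finset.mem_univ j, hj⟩

theorem degree_le_mul {a : ℝ} (h : ∀ i j, A i j ≤ a * B i j) (i : ι) :
    A.degree i ≤ a * B.degree i := by
  rw [degree, degree, Finset.mul_sum]
  exact Finset.sum_le_sum fun k _ => h i k

theorem dirichletForm_nonneg (hA : ∀ i j, 0 ≤ A i j) (y : ι → ℝ) : 0 ≤ A.dirichletForm y :=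
  mul_nonneg (by norm_num) <| Finset.sum_nonneg fun i _ =>
    Finset.sum_nonneg fun j _ => mul_nonneg (hA i j) (sq_nonneg _)

theorem dirichletForm_sub_const (A : Matrix ι ι ℝ) (y : ι → ℝ) (c : ℝ) :
    A.dirichletForm (fun i => y i - c) = A.dirichletForm y := by
  simp only [dirichletForm, sub_sub_sub_cancel_right]

theorem dirichletForm_le_mul {b : ℝ} (h : ∀ i j, A i j ≤ b * B i j) (y : ι → ℝ) :
    A.dirichletForm y ≤ b * B.dirichletForm y := by
  calc A.dirichletForm y ≤ 2⁻¹ * ∑ i, ∑ j, b * (B i j * (y i - y j) ^ 2) := by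
        refine mul_le_mul_of_nonneg_left (Finset.sum_le_sum fun i _ =>
          Finset.sum_le_sum fun j _ => ?_) (by norm_num)
        rw [← mul_assoc]
        exact mul_le_mul_of_nonneg_right (h i j) (sq_nonneg _)
    _ = b * B.dirichletForm y := by simp only [dirichletForm, ← Finset.mul_sum]; ring

theorem IsSymm.dirichletForm_eq (hA : A.IsSymm) (y : ι → ℝ) :
    A.dirichletForm y = A.degreeNormSq y - ∑ i, ∑ j, A i j * (y i * y j) := by
  have h_left : ∑ i, ∑ j, A i j * y i ^ 2 = A.degreeNormSq y := by
    simp only [degreeNormSq, degree, Finset.sum_mul]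
  have h_right : ∑ i, ∑ j, A i j * y j ^ 2 = A.degreeNormSq y := by
    rw [Finset.sum_comm, ← h_left]
    simp only [hA.apply]
  have h_expand : ∀ i j, A i j * (y i - y j) ^ 2
      = A i j * y i ^ 2 + A i j * y j ^ 2 - 2 * (A i j * (y i * y j)) := fun i j => by ring
  simp only [dirichletForm, h_expand, Finset.sum_sub_distrib, Finset.sum_add_distrib,
    ← Finset.mul_sum, h_left, h_right]
  ring

theorem degreeNormSq_pos (hd : ∀ i, 0 < A.degree i) {y : ι → ℝ} (hy : y ≠ 0) :
    0 < A.degreeNormSq y := by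
  obtain ⟨i, hi⟩ := Function.ne_iff.1 hy
  exact Finset.sum_pos' (fun j _ => mul_nonneg (hd j).le (sq_nonneg _))
    ⟨i, Finset.mem_univ i, mul_pos (hd i) (sq_pos_of_ne_zero hi)⟩

theorem degreeNormSq_le_mul {a : ℝ} (h : ∀ i j, A i j ≤ a * B i j) (y : ι → ℝ) :
    A.degreeNormSq y ≤ a * B.degreeNormSq y := by
  rw [degreeNormSq, degreeNormSq, Finset.mul_sum]
  refine Finset.sum_le_sum fun i _ => ?_
  rw [← mul_assoc]
  exact mul_le_mul_of_nonneg_right (degree_le_mul h i) (sq_nonneg _)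

theorem degreeNormSq_le_sub_const (hd : ∀ i, 0 ≤ A.degree i) {y : ι → ℝ}
    (hy : ∑ i, A.degree i * y i = 0) (c : ℝ) :
    A.degreeNormSq y ≤ A.degreeNormSq (fun i => y i - c) := by
  have h_expand : A.degreeNormSq (fun i => y i - c)
      = A.degreeNormSq y - 2 * c * ∑ i, A.degree i * y i + c ^ 2 * ∑ i, A.degree i := by
    simp only [degreeNormSq, Finset.mul_sum, ← Finset.sum_sub_distrib, ← Finset.sum_add_distrib]
    exact Finset.sum_congr rfl fun i _ => by ring
  rw [h_expand, hy, mul_zero, sub_zero, le_add_iff_nonneg_right]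
  exact mul_nonneg (sq_nonneg c) (Finset.sum_nonneg fun i _ => hd i)

theorem sum_degree_mul_sub_weightedMean (hd : ∑ i, A.degree i ≠ 0) (y : ι → ℝ) :
    ∑ i, A.degree i * (y i - (∑ j, A.degree j * y j) / ∑ j, A.degree j) = 0 := by
  simp only [mul_sub, Finset.sum_sub_distrib, ← Finset.sum_mul]
  rw [mul_div_cancel₀ _ hd, sub_self]


theorem rayleighQuotients_nonempty (hd : ∀ i, A.degree i ≠ 0) {i j : ι} (hij : i ≠ j) :
    A.rayleighQuotients.Nonempty := by
  classical
  refine ⟨_, Pi.single i (A.degree j) - Pi.single j (A.degree i), fun h => hd j ?_, ?_, rfl⟩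
  · simpa [hij] using congrFun h i
  · simp [mul_sub, Finset.sum_sub_distrib, Pi.single_apply, mul_comm]

theorem bddBelow_rayleighQuotients (hA : ∀ i j, 0 ≤ A i j) : BddBelow A.rayleighQuotients := by
  refine ⟨0, ?_⟩
  rintro r ⟨y, -, -, rfl⟩
  exact div_nonneg (dirichletForm_nonneg hA y) <|
    Finset.sum_nonneg fun i _ => mul_nonneg (degree_nonneg hA i) (sq_nonneg _)

theorem exists_mem_rayleighQuotients_le_mul (hB : ∀ i j, 0 ≤ B i j)
    (hdA : ∀ i, 0 < A.degree i) (hdB : ∀ i, 0 < B.degree i) {a b : ℝ} (ha : 0 < a)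
    (hAB : ∀ i j, A i j ≤ a * B i j) (hBA : ∀ i j, B i j ≤ b * A i j)
    {r : ℝ} (hr : r ∈ A.rayleighQuotients) : ∃ s ∈ B.rayleighQuotients, s ≤ a * b * r := by
  obtain ⟨y, hy, hy_perp, rfl⟩ := hr
  obtain ⟨i, -⟩ := Function.ne_iff.1 hy
  set z : ι → ℝ := fun k => y k - (∑ j, B.degree j * y j) / ∑ j, B.degree j
  have hz_perp : ∑ k, B.degree k * z k = 0 :=
    sum_degree_mul_sub_weightedMean (Finset.sum_pos (fun j _ => hdB j) ⟨i, mem_univ i⟩).ne' y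
  have hA_pos : 0 < A.degreeNormSq y := degreeNormSq_pos hdA hy
  have h_norm : A.degreeNormSq y ≤ a * B.degreeNormSq z :=
    (degreeNormSq_le_sub_const (fun k => (hdA k).le) hy_perp _).trans (degreeNormSq_le_mul hAB z)
  have hB_pos : 0 < B.degreeNormSq z := pos_of_mul_pos_right (hA_pos.trans_le h_norm) ha.le
  have hz : z ≠ 0 := fun hz => by simp [hz, degreeNormSq] at hB_pos
  have h_dir : B.dirichletForm z ≤ b * A.dirichletForm y :=
    (dirichletForm_sub_const B y _).trans_le (dirichletForm_le_mul hBA y)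
  refine ⟨_, ⟨z, hz, hz_perp, rfl⟩, ?_⟩
  calc B.dirichletForm z / B.degreeNormSq z ≤ b * A.dirichletForm y / B.degreeNormSq z :=
        div_le_div_of_nonneg_right h_dir hB_pos.le
    _ = a * b * A.dirichletForm y / (a * B.degreeNormSq z) := by
        rw [mul_assoc, mul_div_mul_left _ _ ha.ne']
    _ ≤ a * b * A.dirichletForm y / A.degreeNormSq y := by
        refine div_le_div_of_nonneg_left ?_ hA_pos h_norm
        rw [mul_assoc]
        exact mul_nonneg ha.le ((dirichletForm_nonneg hB z).trans h_dir)
    _ = a * b * (A.dirichletForm y / A.degreeNormSq y) := mul_div_assoc _ _ _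

end

end Matrix

section

variable {n : ℕ} {A B : Matrix (Fin n) (Fin n) ℝ}

theorem sum_mul_normLap_mul (hA : A.IsSymm) (hd : ∀ i, 0 < A.degree i) (y : Fin n → ℝ) :
    ∑ i, ∑ j, (√(A.degree i) * y i) * normLap A i j * (√(A.degree j) * y j)
      = A.dirichletForm y := by
  have hs : ∀ i, √(A.degree i) ≠ 0 := fun i => (Real.sqrt_pos.2 (hd i)).ne'
  have h_entry : ∀ i j, (√(A.degree i) * y i) * normLap A i j * (√(A.degree j) * y j)
      = (if i = j then A.degree i * y i ^ 2 else 0) - A i j * (y i * y j) := by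
    intro i j
    change (√(A.degree i) * y i) * ((1 : Matrix (Fin n) (Fin n) ℝ) i j
      - A i j / (√(A.degree i) * √(A.degree j))) * (√(A.degree j) * y j) = _
    rcases eq_or_ne i j with rfl | hij
    · have hdi := (hd i).ne'
      rw [one_apply_eq, if_pos rfl, Real.mul_self_sqrt (hd i).le]
      field_simp
      rw [Real.sq_sqrt (hd i).le]
      ring
    · have hsi := hs i
      have hsj := hs j
      rw [one_apply_ne hij, if_neg hij]
      field_simp
      ring
  simp only [h_entry, Finset.sum_sub_distrib, Finset.sum_ite_eq, Finset.mem_univ, if_true,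
    hA.dirichletForm_eq]
  rfl

theorem lambdaUp2_eq_sInf_rayleighQuotients (hA : A.IsSymm) (hd : ∀ i, 0 < A.degree i) :
    lambdaUp2 A = sInf A.rayleighQuotients := by
  have hs : ∀ i, √(A.degree i) ≠ 0 := fun i => (Real.sqrt_pos.2 (hd i)).ne'
  have h_ne : ∀ y : Fin n → ℝ, (fun i => √(A.degree i) * y i) ≠ 0 ↔ y ≠ 0 := fun y => by
    simp [funext_iff, hs]
  have h_perp : ∀ y : Fin n → ℝ,
      ∑ i, √(A.degree i) * y i * √(A.degree i) = ∑ i, A.degree i * y i := fun y => by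
    congr with i
    rw [mul_right_comm, Real.mul_self_sqrt (hd i).le]
  have h_norm : ∀ y : Fin n → ℝ, ∑ i, (√(A.degree i) * y i) ^ 2 = A.degreeNormSq y := fun y => by
    congr with i
    rw [mul_pow, Real.sq_sqrt (hd i).le]
  change sInf {r : ℝ | ∃ x : Fin n → ℝ, x ≠ 0 ∧ ∑ i, x i * √(A.degree i) = 0 ∧
    r = (∑ i, ∑ j, x i * normLap A i j * x j) / ∑ i, x i ^ 2} = _
  congr 1
  ext r
  constructor
  · rintro ⟨x, hx, hx_perp, rfl⟩
    obtain ⟨y, rfl⟩ : ∃ y : Fin n → ℝ, x = fun i => √(A.degree i) * y i :=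
      ⟨fun i => x i / √(A.degree i), funext fun i => (mul_div_cancel₀ _ (hs i)).symm⟩
    exact ⟨y, (h_ne y).1 hx, (h_perp y).symm.trans hx_perp,
      by rw [sum_mul_normLap_mul hA hd, h_norm]⟩
  · rintro ⟨y, hy, hy_perp, rfl⟩
    exact ⟨_, (h_ne y).2 hy, (h_perp y).trans hy_perp, by rw [sum_mul_normLap_mul hA hd, h_norm]⟩

theorem lambdaUp2_le_mul_lambdaUp2 (hn : 2 ≤ n) (hA : A.IsSymm) (hB : B.IsSymm)
    (hB_nonneg : ∀ i j, 0 ≤ B i j) (hdA : ∀ i, 0 < A.degree i) (hdB : ∀ i, 0 < B.degree i)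
    {a b : ℝ} (ha : 0 < a) (hb : 0 < b)
    (hAB : ∀ i j, A i j ≤ a * B i j) (hBA : ∀ i j, B i j ≤ b * A i j) :
    lambdaUp2 B ≤ a * b * lambdaUp2 A := by
  rw [lambdaUp2_eq_sInf_rayleighQuotients hA hdA, lambdaUp2_eq_sInf_rayleighQuotients hB hdB]
  have h01 : (⟨0, by omega⟩ : Fin n) ≠ ⟨1, by omega⟩ := by simp
  exact csInf_le_mul_csInf (bddBelow_rayleighQuotients hB_nonneg)
    (rayleighQuotients_nonempty (fun i => (hdA i).ne') h01) (mul_pos ha hb)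
    fun r hr => exists_mem_rayleighQuotients_le_mul hB_nonneg hdA hdB ha hAB hBA hr

end

theorem laplacian_stability {n : ℕ} (W Wt : Matrix (Fin n) (Fin n) ℝ)
    (hn : 2 ≤ n)
    (hWsym : W.IsSymm) (hWtsym : Wt.IsSymm)
    (hWnn : ∀ i j, 0 ≤ W i j) (hWtnn : ∀ i j, 0 ≤ Wt i j)
    (hWrow : ∀ i, ∃ j, 0 < W i j)
    (hsupp : ∀ i j, W i j = 0 ↔ Wt i j = 0)
    (ν : ℝ)
    (hν : ν = (Finset.univ.sup' ⟨(⟨0, by omega⟩, ⟨0, by omega⟩), Finset.mem_univ _⟩ fun p : Fin n × Fin n =>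
        ratio01 (W p.1 p.2) (Wt p.1 p.2)) *
      (Finset.univ.sup' ⟨(⟨0, by omega⟩, ⟨0, by omega⟩), Finset.mem_univ _⟩ fun p : Fin n × Fin n =>
        ratio01 (Wt p.1 p.2) (W p.1 p.2))) :
    lambdaUp2 Wt ≤ ν * lambdaUp2 W := by
  have hWt_pos : ∀ i j, 0 < W i j → 0 < Wt i j := fun i j h =>
    (hWtnn i j).lt_of_ne' fun h0 => h.ne' ((hsupp i j).2 h0)
  obtain ⟨j, hj⟩ := hWrow ⟨0, by omega⟩
  subst hν
  set rW : Fin n × Fin n → ℝ := fun p => ratio01 (W p.1 p.2) (Wt p.1 p.2)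
  set rWt : Fin n × Fin n → ℝ := fun p => ratio01 (Wt p.1 p.2) (W p.1 p.2)
  exact lambdaUp2_le_mul_lambdaUp2 hn hWsym hWtsym hWtnn
    (fun i => degree_pos hWnn (hWrow i))
    (fun i => degree_pos hWtnn ((hWrow i).imp fun j => hWt_pos i j))
    ((ratio01_pos hj (hWt_pos _ _ hj)).trans_le (le_sup' rW (mem_univ (_, j))))
    ((ratio01_pos (hWt_pos _ _ hj) hj).trans_le (le_sup' rWt (mem_univ (_, j))))
    (fun i j => le_mul_of_ratio01_le (hWtnn i j) (hsupp i j) (le_sup' rW (mem_univ (i, j))))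
    (fun i j => le_mul_of_ratio01_le (hWnn i j) (hsupp i j).symm (le_sup' rWt (mem_univ (i, j))))
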